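/- Let G be a graph on a finite point set P ⊆ ℝ² whose edges are pairs at Euclidean distance ≤ r, weighted by Euclidean distance, and let optdist(v) denote the weighted shortest-path distance from a source s to v. Let y be a vertex with a shortest path π(y) from s, let y' be the predecessor of y on π(y) and y'' the predecessor of y'. Assume the strict triangle inequality ‖y'' − y‖ < ‖y'' − y'‖ + ‖y' − y‖ holds and that ‖y'' − y‖ > r (y'' and y are not adjacent). Let x be any vertex with ‖x − y‖ ≤ r. Then optdist(y'') + r < optdist(y), and if additionally optdist(y) ≤ optdist(x) + ‖x − y‖, then optdist(y'') < optdist(x). -/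
import Mathlib

local notation "E" => EuclideanSpace ℝ (Fin 2)

/-- Key inequality in the proof of Claim 3: if `y''`, `y'`, `y` are consecutive
on a shortest path (so `optdist y = optdist y'' + ‖y''-y'‖ + ‖y'-y‖`), the strict
triangle inequality holds, `‖y'' - y‖ > r`, and `x` satisfies `‖x - y‖ ≤ r` and
`optdist y ≤ optdist x + ‖x - y‖`, then `optdist y'' + r < optdist y` and
`optdist y'' < optdist x`. -/
theorem stmt9 (y y' y'' x : E) (r : ℝ) (optdist : E → ℝ)
    (hstrict : ‖y'' - y‖ < ‖y'' - y'‖ + ‖y' - y‖)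
    (hfar : r < ‖y'' - y‖)
    (heq : optdist y = optdist y'' + ‖y'' - y'‖ + ‖y' - y‖)
    (hxy : ‖x - y‖ ≤ r)
    (hx : optdist y ≤ optdist x + ‖x - y‖) :
    optdist y'' + r < optdist y ∧ optdist y'' < optdist x := by
  constructor <;> linarith
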